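/- Let σ(x) = 1/(1+e^{-x}) be the sigmoid function, let α ∈ ℝ, let τ > 0, and let U be uniformly distributed on (0,1). Define G(α,τ) = σ((α + log U − log(1−U))/τ). Then for every ε ∈ (0,1), P(G(α,τ) ≤ ε) = σ(−α − τ·log(1/ε − 1)). -/

import Mathlib

/-!
On `(0, 1)` the sigmoid is inverted by `logit u = log u - log (1 - u)`, and `-log (1/ε - 1)` is
just `logit ε`. As `σ` is strictly increasing, `G(α, τ) ≤ ε` is the event `logit U ≤ τ · logit ε - α`,
and `{u ∈ (0, 1) | logit u ≤ c} = (0, σ c]`: the logit of a uniform variable is standard logistic.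
-/

open MeasureTheory Real

noncomputable def sigmoid (x : ℝ) : ℝ := 1 / (1 + Real.exp (-x))

theorem sigmoid_eq_real_sigmoid : _root_.sigmoid = Real.sigmoid :=
  funext fun _ => one_div _

noncomputable def logit (u : ℝ) : ℝ := Real.log u - Real.log (1 - u)

theorem sigmoid_logit {u : ℝ} (hu₀ : 0 < u) (hu₁ : u < 1) : Real.sigmoid (logit u) = u := by
  have h1u : 0 < 1 - u := sub_pos.mpr hu₁
  rw [Real.sigmoid_def, logit, neg_sub, Real.exp_sub, Real.exp_log hu₀, Real.exp_log h1u]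
  field_simp
  ring

theorem le_sigmoid_iff_logit_le {u : ℝ} (hu₀ : 0 < u) (hu₁ : u < 1) (c : ℝ) :
    u ≤ Real.sigmoid c ↔ logit u ≤ c := by
  conv_lhs => rw [← sigmoid_logit hu₀ hu₁]
  exact Real.sigmoid_le_iff

theorem logit_eq_neg_log_inv_sub_one {ε : ℝ} (hε₀ : 0 < ε) (hε₁ : ε < 1) :
    logit ε = -Real.log (1 / ε - 1) := by
  have h1ε : 0 < 1 - ε := sub_pos.mpr hε₁
  rw [div_sub_one hε₀.ne', Real.log_div h1ε.ne' hε₀.ne', logit, neg_sub]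

theorem sigmoid_div_le_iff_le_mul_logit {τ ε : ℝ} (hτ : 0 < τ) (hε₀ : 0 < ε) (hε₁ : ε < 1) (x : ℝ) :
    Real.sigmoid (x / τ) ≤ ε ↔ x ≤ τ * logit ε := by
  conv_lhs => rw [← sigmoid_logit hε₀ hε₁]
  rw [Real.sigmoid_le_iff, div_le_iff₀' hτ]

theorem volume_restrict_Ioo_setOf_logit_le (c : ℝ) :
    volume.restrict (Set.Ioo (0 : ℝ) 1) {u | logit u ≤ c} = ENNReal.ofReal (Real.sigmoid c) := by
  have hset : {u | logit u ≤ c} ∩ Set.Ioo 0 1 = Set.Ioc 0 (Real.sigmoid c) := by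
    ext u
    simp only [Set.mem_inter_iff, Set.mem_ofPred_eq, Set.mem_Ioo, Set.mem_Ioc]
    constructor
    · rintro ⟨hle, hu₀, hu₁⟩
      exact ⟨hu₀, (le_sigmoid_iff_logit_le hu₀ hu₁ c).mpr hle⟩
    · rintro ⟨hu₀, hle⟩
      have hu₁ : u < 1 := hle.trans_lt (Real.sigmoid_lt_one c)
      exact ⟨(le_sigmoid_iff_logit_le hu₀ hu₁ c).mp hle, hu₀, hu₁⟩
  rw [Measure.restrict_apply' measurableSet_Ioo, hset, Real.volume_Ioc, sub_zero]

/-- For U uniform on (0,1) and G(α,τ) = σ((α + log U − log(1−U))/τ),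
    for every ε ∈ (0,1), P(G(α,τ) ≤ ε) = σ(−α − τ·log(1/ε − 1)). -/
theorem gumbel_lower_tail_eq (α τ ε : ℝ) (hτ : 0 < τ) (hε : ε ∈ Set.Ioo (0:ℝ) 1) :
    (volume.restrict (Set.Ioo (0:ℝ) 1))
      {u : ℝ | _root_.sigmoid ((α + Real.log u - Real.log (1 - u)) / τ) ≤ ε}
      = ENNReal.ofReal (_root_.sigmoid (-α - τ * Real.log (1/ε - 1))) := by
  obtain ⟨hε₀, hε₁⟩ := hε
  have hset : {u : ℝ | _root_.sigmoid ((α + Real.log u - Real.log (1 - u)) / τ) ≤ ε}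
      = {u | logit u ≤ -α - τ * Real.log (1 / ε - 1)} := by
    ext u
    rw [Set.mem_ofPred_eq, Set.mem_ofPred_eq, sigmoid_eq_real_sigmoid, add_sub_assoc,
      sigmoid_div_le_iff_le_mul_logit hτ hε₀ hε₁, logit_eq_neg_log_inv_sub_one hε₀ hε₁, logit]
    constructor <;> intro h <;> linarith
  rw [hset, volume_restrict_Ioo_setOf_logit_le, sigmoid_eq_real_sigmoid]
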